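/- If N: Lie(n-1) → V is a linear map to a vector space V, then for every Lie monomial Γ, N(Γ) = Σ_a (Γ, 1a) N(Γ_{1a}), where the sum is over permutations a of the letters other than x_1. -/

import Mathlib

open scoped BigOperators

/-- `Wd m` : the algebra of formal ℚ-linear combinations of words in letters `x_1,…,x_m`
(represented as `Fin m`), with concatenation product. -/
abbrev Wd (m : ℕ) := MonoidAlgebra ℚ (FreeMonoid (Fin m))

/-- The word monomial associated to a list of letters. -/
noncomputable def word {m : ℕ} (l : List (Fin m)) : Wd m :=
  MonoidAlgebra.single (FreeMonoid.ofList l) 1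

/-- All interleavings (shuffles) of two lists. -/
def shuffles {α : Type*} : List α → List α → List (List α)
  | [], bs => [bs]
  | a :: as, [] => [a :: as]
  | a :: as, b :: bs =>
      (shuffles as (b :: bs)).map (a :: ·) ++ (shuffles (a :: as) bs).map (b :: ·)

/-- The shuffle product of two words, as an element of `Wd m`. -/
noncomputable def shuffleProd {m : ℕ} (a b : List (Fin m)) : Wd m :=
  ((shuffles a b).map word).sum

/-- Binary trees representing iterated commutators (Lie monomials). -/
inductive LieTree (m : ℕ) where
  | leaf : Fin m → LieTree m
  | node : LieTree m → LieTree m → LieTree m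

/-- Expansion of a Lie monomial in the word algebra, via `[u,v] = uv - vu`. -/
noncomputable def LieTree.expand {m : ℕ} : LieTree m → Wd m
  | .leaf i => word [i]
  | .node u v => u.expand * v.expand - v.expand * u.expand

/-- The list of leaf labels of a Lie tree, read left to right. -/
def LieTree.leaves {m : ℕ} : LieTree m → List (Fin m)
  | .leaf i => [i]
  | .node u v => u.leaves ++ v.leaves

/-- `Lie(m)` : the span of the multilinear Lie monomials (each letter used exactly once). -/
noncomputable def LieSub (m : ℕ) : Submodule ℚ (Wd m) :=
  Submodule.span ℚ
    {x | ∃ T : LieTree m, T.leaves.Perm (List.finRange m) ∧ x = LieTree.expand T}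

/-- `W(m)` : the span of the multilinear words (each letter used exactly once). -/
noncomputable def Wsub (m : ℕ) : Submodule ℚ (Wd m) :=
  Submodule.span ℚ {x | ∃ l : List (Fin m), l.Perm (List.finRange m) ∧ x = word l}

/-- `Sh(m)` : the span of nontrivial shuffles of multilinear words. -/
noncomputable def ShSub (m : ℕ) : Submodule ℚ (Wd m) :=
  Submodule.span ℚ
    {x | ∃ a b : List (Fin m), a ≠ [] ∧ b ≠ [] ∧ (a ++ b).Perm (List.finRange m) ∧
      x = shuffleProd a b}

/-- The left-nested comb `Γ_{1a} = [...[[x_1, a_1], a_2], …]` (the letter `x_1` is `0`). -/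
def comb {m : ℕ} [NeZero m] (a : List (Fin m)) : LieTree m :=
  a.foldl (fun t i => LieTree.node t (LieTree.leaf i)) (LieTree.leaf 0)

/-- The finset of permutations of the letters `x_2,…,x_m` (i.e. of `(finRange m).tail`). -/
noncomputable def permsTail (m : ℕ) : Finset (List (Fin m)) :=
  ((List.finRange m).tail).permutations.toFinset

/-! The Jacobi identity `⁅c, ⁅u, v⁆⁆ = ⁅⁅c, u⁆, v⁆ - ⁅⁅c, v⁆, u⁆` shows, by induction on trees, that
bracketing a comb `Γ_{1a}` with a Lie monomial gives a combination of combs; hence every Lie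
monomial containing `x_1` lies in the span of the combs `Γ_{1a}`, `a` an arrangement of its other
letters. The only word of `Γ_{1a}` that begins with `x_1` is `1a`, so `(Γ_{1a}, 1b) = δ_{ab}` and
the coefficients of `Γ` in that span are the inner products `(Γ, 1a)`. -/

open FreeMonoid MonoidAlgebra

attribute [local instance] LieRing.ofAssociativeRing

variable {m : ℕ}

lemma LieTree.expand_node (u v : LieTree m) : (LieTree.node u v).expand = ⁅u.expand, v.expand⁆ :=
  (Ring.lie_def _ _).symm

lemma LieTree.leaves_node (u v : LieTree m) : (LieTree.node u v).leaves = u.leaves ++ v.leaves :=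
  rfl

lemma coeff_mul_word_singleton (x : Wd m) (i j : Fin m) (w : List (Fin m)) :
    (x * word [i]).coeff (ofList (w ++ [j])) = if j = i then x.coeff (ofList w) else 0 := by
  split_ifs with hji
  · subst hji
    refine (coeff_mul_single_eq_coeff_mul _ fun u _ => ?_).trans (mul_one _)
    exact (List.append_left_injective [j]).eq_iff (a := u.toList) (b := w)
  · refine coeff_mul_single_of_forall_mul_ne _ _ fun u hu => hji ?_
    exact (List.append_singleton_inj.mp (hu : u.toList ++ [i] = w ++ [j]).symm).2

lemma coeff_word_singleton_mul_of_ne (x : Wd m) {i j : Fin m} (hij : i ≠ j) (w : List (Fin m)) :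
    (word [i] * x).coeff (ofList (j :: w)) = 0 :=
  coeff_single_mul_of_forall_mul_ne _ _ fun u hu =>
    hij (List.cons.inj (hu : i :: u.toList = j :: w)).1

lemma coeff_word_singleton_cons (i : Fin m) (w : List (Fin m)) :
    (word [i]).coeff (ofList (i :: w)) = if [] = w then 1 else 0 := by
  classical
  simp only [word, coeff_single, Finsupp.single_apply, ofList.injective.eq_iff, List.cons.injEq,
    true_and]

variable [NeZero m]

lemma comb_append_singleton (a : List (Fin m)) (i : Fin m) :
    comb (a ++ [i]) = .node (comb a) (.leaf i) := by
  simp [comb, List.foldl_append]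

lemma expand_comb_append_singleton (a : List (Fin m)) (i : Fin m) :
    (comb (a ++ [i])).expand = ⁅(comb a).expand, word [i]⁆ := by
  rw [comb_append_singleton, LieTree.expand_node]
  rfl

lemma coeff_expand_comb {a : List (Fin m)} (ha : 0 ∉ a) (b : List (Fin m)) :
    (comb a).expand.coeff (ofList (0 :: b)) = if a = b then 1 else 0 := by
  induction a using List.reverseRecOn generalizing b with
  | nil => exact coeff_word_singleton_cons 0 b
  | append_singleton a i ih =>
    have hi : i ≠ 0 := fun h => ha (by simp [h])
    rw [expand_comb_append_singleton, Ring.lie_def, coeff_sub, Finsupp.sub_apply,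
      coeff_word_singleton_mul_of_ne _ hi, sub_zero]
    rcases List.eq_nil_or_concat b with rfl | ⟨b, j, rfl⟩
    · rw [show [(0 : Fin m)] = [] ++ [0] from rfl, coeff_mul_word_singleton, if_neg hi.symm,
        if_neg (by simp)]
    · rw [List.concat_eq_append, ← List.cons_append, coeff_mul_word_singleton,
        ih (fun h => ha (by simp [h]))]
      by_cases hji : j = i
      · simp [hji]
      · simp [hji, List.append_singleton_inj, Ne.symm hji]

noncomputable def combSpan (L : List (Fin m)) : Submodule ℚ (Wd m) :=
  Submodule.span ℚ {x | ∃ b : List (Fin m), b.Perm L ∧ x = (comb b).expand}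

lemma combSpan_eq_of_perm {L L' : List (Fin m)} (h : L.Perm L') : combSpan L = combSpan L' := by
  unfold combSpan
  congr 1
  ext x
  exact exists_congr fun b => and_congr_left fun _ => ⟨(·.trans h), (·.trans h.symm)⟩

lemma lie_mem_combSpan_append (z : LieTree m)
    (hz : ∀ b : List (Fin m), ⁅(comb b).expand, z.expand⁆ ∈ combSpan (b ++ z.leaves))
    {L : List (Fin m)} {x : Wd m} (hx : x ∈ combSpan L) :
    ⁅x, z.expand⁆ ∈ combSpan (L ++ z.leaves) := by
  induction hx using Submodule.span_induction with
  | mem y hy =>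
    obtain ⟨b, hb, rfl⟩ := hy
    exact combSpan_eq_of_perm (hb.append_right _) ▸ hz b
  | zero => simp
  | add y y' _ _ hy hy' => simpa only [add_lie] using add_mem hy hy'
  | smul r y _ hy => simpa only [smul_lie] using Submodule.smul_mem _ r hy

lemma lie_expand_comb_mem_combSpan (z : LieTree m) (a : List (Fin m)) :
    ⁅(comb a).expand, z.expand⁆ ∈ combSpan (a ++ z.leaves) := by
  induction z generalizing a with
  | leaf i =>
    exact expand_comb_append_singleton a i ▸ Submodule.subset_span ⟨a ++ [i], .refl _, rfl⟩
  | node u v ihu ihv =>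
    have jacobi : ⁅(comb a).expand, (LieTree.node u v).expand⁆ =
        ⁅⁅(comb a).expand, u.expand⁆, v.expand⁆ - ⁅⁅(comb a).expand, v.expand⁆, u.expand⁆ := by
      rw [LieTree.expand_node, leibniz_lie, sub_eq_add_neg, lie_skew]
    have huv := lie_mem_combSpan_append v ihv (ihu a)
    have hvu := lie_mem_combSpan_append u ihu (ihv a)
    rw [List.append_assoc] at huv
    rw [combSpan_eq_of_perm (by simpa using List.perm_append_comm.append_left a)] at hvu
    rw [jacobi, LieTree.leaves_node]
    exact sub_mem huv hvu

lemma expand_mem_combSpan_erase (T : LieTree m) (h0 : 0 ∈ T.leaves) :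
    T.expand ∈ combSpan (T.leaves.erase 0) := by
  induction T with
  | leaf i =>
    obtain rfl : 0 = i := by simpa [LieTree.leaves] using h0
    exact Submodule.subset_span ⟨[], by simp [LieTree.leaves], rfl⟩
  | node u v ihu ihv =>
    rw [LieTree.leaves_node] at h0 ⊢
    rw [LieTree.expand_node]
    by_cases h0u : 0 ∈ u.leaves
    · rw [List.erase_append_left _ h0u]
      exact lie_mem_combSpan_append v (lie_expand_comb_mem_combSpan v) (ihu h0u)
    · have h0v : 0 ∈ v.leaves := (List.mem_append.mp h0).resolve_left h0u
      rw [List.erase_append_right _ h0u, combSpan_eq_of_perm List.perm_append_comm, ← lie_skew]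
      exact neg_mem (lie_mem_combSpan_append u (lie_expand_comb_mem_combSpan u) (ihv h0v))

lemma finRange_eq_zero_cons_tail : List.finRange m = 0 :: (List.finRange m).tail := by
  obtain ⟨k, rfl⟩ := Nat.exists_eq_succ_of_ne_zero (NeZero.ne m)
  rw [List.finRange_succ]
  rfl

lemma zero_notMem_finRange_tail : (0 : Fin m) ∉ (List.finRange m).tail := by
  have h := List.nodup_finRange m
  rw [finRange_eq_zero_cons_tail] at h
  exact (List.nodup_cons.mp h).1

lemma finRange_erase_zero : (List.finRange m).erase 0 = (List.finRange m).tail := by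
  rw [finRange_eq_zero_cons_tail, List.erase_cons_head, ← finRange_eq_zero_cons_tail]

lemma eq_sum_coeff_smul_expand_comb {x : Wd m} (hx : x ∈ combSpan (List.finRange m).tail) :
    x = ∑ a ∈ (permsTail m).attach, x.coeff (ofList (0 :: a.1)) • (comb a.1).expand := by
  induction hx using Submodule.span_induction with
  | mem y hy =>
    obtain ⟨b, hb, rfl⟩ := hy
    have hb0 : 0 ∉ b := fun h => zero_notMem_finRange_tail (hb.subset h)
    have hbT : b ∈ permsTail m := List.mem_toFinset.mpr (List.mem_permutations.mpr hb)
    simp_rw [coeff_expand_comb hb0, ite_smul, one_smul, zero_smul]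
    rw [Finset.sum_eq_single_of_mem ⟨b, hbT⟩ (Finset.mem_attach _ _)
      fun a _ hne => if_neg fun h => hne (Subtype.ext h.symm), if_pos rfl]
  | zero => simp
  | add y y' _ _ hy hy' =>
    conv_lhs => rw [hy, hy']
    simp only [coeff_add, Finsupp.add_apply, add_smul, Finset.sum_add_distrib]
  | smul r y _ hy =>
    conv_lhs => rw [hy]
    simp only [coeff_smul_apply, smul_eq_mul, mul_smul, Finset.smul_sum]

lemma LieTree.expand_eq_sum_coeff_smul_expand_comb (T : LieTree m)
    (hT : T.leaves.Perm (List.finRange m)) :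
    T.expand = ∑ a ∈ (permsTail m).attach,
      T.expand.coeff (ofList (0 :: a.1)) • (comb a.1).expand := by
  have h0 : 0 ∈ T.leaves := hT.mem_iff.mpr (List.mem_finRange 0)
  have herase := hT.erase (0 : Fin m)
  rw [finRange_erase_zero] at herase
  exact eq_sum_coeff_smul_expand_comb
    (combSpan_eq_of_perm herase ▸ expand_mem_combSpan_erase T h0)

/-- for any linear map `N : Lie(n-1) → V` and any multilinear Lie monomial `Γ`,
`N(Γ) = Σ_a (Γ, 1a) N(Γ_{1a})`, the sum running over the permutations `a` of the letters
other than `x_1`. -/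
theorem stmt8 (n : ℕ) [NeZero (n - 1)] (V : Type*) [AddCommGroup V] [Module ℚ V]
    (N : LieSub (n - 1) →ₗ[ℚ] V)
    (T : LieTree (n - 1)) (hT : T.leaves.Perm (List.finRange (n - 1)))
    (x : LieSub (n - 1)) (hx : (x : Wd (n - 1)) = T.expand)
    (c : ∀ a : List (Fin (n - 1)), a.Perm ((List.finRange (n - 1)).tail) → LieSub (n - 1))
    (hc : ∀ a h, ((c a h : LieSub (n - 1)) : Wd (n - 1)) = (comb a).expand) :
    N x = ∑ a ∈ (permsTail (n - 1)).attach,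
        (T.expand.coeff (FreeMonoid.ofList ((0 : Fin (n - 1)) :: a.1))) •
          N (c a.1 (List.mem_permutations.mp (List.mem_toFinset.mp a.2))) := by
  have hx_sum : x = ∑ a ∈ (permsTail (n - 1)).attach,
      T.expand.coeff (ofList (0 :: a.1)) •
        c a.1 (List.mem_permutations.mp (List.mem_toFinset.mp a.2)) := by
    apply Subtype.ext
    simp only [hx, Submodule.coe_sum, Submodule.coe_smul, hc]
    exact T.expand_eq_sum_coeff_smul_expand_comb hT
  simp only [hx_sum, map_sum, map_smul]
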